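/- If an (n−1)-CNF F in n variables (every clause of F omits at least one variable) has a resolution refutation of height h and length s in which every clause is non-tautological, then F has a resolution refutation of h levels of 3s clauses. -/

import Mathlib

/-! Rank every clause `C_u` of the refutation by its height, the length of the longest premise
chain ending at `u`: clauses of height 1 are weakenings of clauses of `F`, and a clause of
height `k ≥ 2` is a weakening of a resolvent of two clauses of height `< k`. Fix a variable `x₀`.
Level `i` holds, for every `u`, the three clauses `x₀ ∨ Q`, `¬x₀ ∨ Q` and `Q`, where `Q = C_u`
if `u` has height at most `i + 1` and `Q` is a fixed clause of `F` otherwise. A clause of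
height `i + 2` is derived from the third slots of level `i`; every other `Q` is carried to the
next level by resolving its two padded copies on `x₀`. If the height is 1, the empty clause
itself belongs to `F`. -/

abbrev Lit (n : ℕ) := Fin n × Bool
abbrev Clause (n : ℕ) := Finset (Lit n)
abbrev CNF (n : ℕ) := Finset (Clause n)

/-- A total assignment satisfies a literal. -/
def satLit {n : ℕ} (α : Fin n → Bool) (l : Lit n) : Prop := α l.1 = l.2

/-- A total assignment satisfies a clause if it satisfies some literal in it. -/
def satClause {n : ℕ} (α : Fin n → Bool) (C : Clause n) : Prop := ∃ l ∈ C, satLit α l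

/-- A total assignment satisfies a CNF if it satisfies all its clauses. -/
def satCNF {n : ℕ} (α : Fin n → Bool) (F : CNF n) : Prop := ∀ C ∈ F, satClause α C

/-- The resolventC of `C₁` and `C₂` on variable `x`: `(C₁ \ {x}) ∪ (C₂ \ {¬x})`. -/
def resolventC {n : ℕ} (C₁ C₂ : Clause n) (x : Fin n) : Clause n :=
  C₁.erase (x, true) ∪ C₂.erase (x, false)

/-- A resolution refutation of `F`: a nonempty sequence of clauses ending in the empty
clause, in which every clause is a weakening of a clause of `F` or a weakening of a
resolventC of two earlier clauses. -/
def IsRefutation {n : ℕ} (F : CNF n) (Prf : List (Clause n)) : Prop :=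
  Prf ≠ [] ∧ Prf.getLast? = some ∅ ∧
  ∀ u : Fin Prf.length,
    (∃ D ∈ F, D ⊆ Prf.get u) ∨
    ∃ v w : Fin Prf.length, v < u ∧ w < u ∧ ∃ x : Fin n,
      (x, true) ∈ Prf.get v ∧ (x, false) ∈ Prf.get w ∧
      resolventC (Prf.get v) (Prf.get w) x ⊆ Prf.get u

/-- Same as in stmt_3: a resolution refutation of `s` levels of `t` clauses. -/
def IsLevelledRefutation {n s t : ℕ} (F : CNF n) (C : Fin s → Fin t → Clause n) : Prop :=
  ∃ (hs : 0 < s) (ht : 0 < t),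
    (∀ j : Fin t, ∃ D ∈ F, D ⊆ C ⟨0, hs⟩ j) ∧
    (∀ (i : ℕ) (hi : i + 1 < s) (j : Fin t), ∃ (j₁ j₂ : Fin t) (x : Fin n),
      (x, true) ∈ C ⟨i, Nat.lt_of_succ_lt hi⟩ j₁ ∧
      (x, false) ∈ C ⟨i, Nat.lt_of_succ_lt hi⟩ j₂ ∧
      resolventC (C ⟨i, Nat.lt_of_succ_lt hi⟩ j₁) (C ⟨i, Nat.lt_of_succ_lt hi⟩ j₂) x
        ⊆ C ⟨i + 1, hi⟩ j) ∧
    C ⟨s - 1, Nat.sub_lt hs Nat.one_pos⟩ ⟨t - 1, Nat.sub_lt ht Nat.one_pos⟩ = ∅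

/-- `C_v` is a premise of a resolution rule by which `C_u` is obtained in `Prf`. -/
def premiseOf {n : ℕ} (Prf : List (Clause n)) (v u : Fin Prf.length) : Prop :=
  v < u ∧ ∃ w : Fin Prf.length, w < u ∧ ∃ x : Fin n,
    (((x, true) ∈ Prf.get v ∧ (x, false) ∈ Prf.get w ∧
        resolventC (Prf.get v) (Prf.get w) x ⊆ Prf.get u) ∨
     ((x, true) ∈ Prf.get w ∧ (x, false) ∈ Prf.get v ∧
        resolventC (Prf.get w) (Prf.get v) x ⊆ Prf.get u))

/-- The height of `Prf`: the supremum of the lengths of chains `u₁, …, u_h` in which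
each `C_{u_i}` is a premise of a resolution rule by which `C_{u_{i+1}}` is obtained. -/
noncomputable def refHeight {n : ℕ} (Prf : List (Clause n)) : ℕ :=
  sSup {h | ∃ L : List (Fin Prf.length), L.length = h ∧ L.Chain' (premiseOf Prf)}

theorem resolventC_insert_insert_subset {n : ℕ} (C : Clause n) (x : Fin n) :
    resolventC (insert (x, true) C) (insert (x, false) C) x ⊆ C := by
  intro l hl
  simp only [resolventC, Finset.mem_union, Finset.mem_erase, Finset.mem_insert] at hl
  tauto

section Layering

variable {n s : ℕ}

structure IsLayering (F : CNF n) (P : Fin s → Clause n) (ρ : Fin s → ℕ) : Prop where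
  weakening_of_le_one : ∀ a, ρ a ≤ 1 → ∃ D ∈ F, D ⊆ P a
  resolvent_of_two_le : ∀ a, 2 ≤ ρ a → ∃ (v w : Fin s) (x : Fin n), ρ v < ρ a ∧ ρ w < ρ a ∧
    (x, true) ∈ P v ∧ (x, false) ∈ P w ∧ resolventC (P v) (P w) x ⊆ P a

def levelClause (P : Fin s → Clause n) (ρ : Fin s → ℕ) (D₀ : Clause n) (i : ℕ) (a : Fin s) :
    Clause n :=
  if ρ a ≤ i + 1 then P a else D₀

def padLiteral (x₀ : Fin n) : Fin 3 → Clause n → Clause n :=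
  ![insert (x₀, true), insert (x₀, false), id]

theorem subset_padLiteral (x₀ : Fin n) (k : Fin 3) (C : Clause n) : C ⊆ padLiteral x₀ k C := by
  fin_cases k <;> simp [padLiteral, Finset.subset_insert]

/-- Slot `(k, a)` of level `i`, stored at index `a + s * k`. -/
def levelledFamily (x₀ : Fin n) (P : Fin s → Clause n) (ρ : Fin s → ℕ) (D₀ : Clause n)
    (i : ℕ) (j : Fin (3 * s)) : Clause n :=
  padLiteral x₀ (finProdFinEquiv.symm j).1 (levelClause P ρ D₀ i (finProdFinEquiv.symm j).2)

theorem levelledFamily_finProdFinEquiv (x₀ : Fin n) (P : Fin s → Clause n) (ρ : Fin s → ℕ)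
    (D₀ : Clause n) (i : ℕ) (k : Fin 3) (a : Fin s) :
    levelledFamily x₀ P ρ D₀ i (finProdFinEquiv (k, a)) =
      padLiteral x₀ k (levelClause P ρ D₀ i a) := by
  simp [levelledFamily]

variable {F : CNF n} {P : Fin s → Clause n} {ρ : Fin s → ℕ} {D₀ : Clause n}

theorem IsLayering.exists_subset_levelClause_zero (hρ : IsLayering F P ρ) (hD₀ : D₀ ∈ F)
    (a : Fin s) : ∃ D ∈ F, D ⊆ levelClause P ρ D₀ 0 a := by
  unfold levelClause
  split_ifs with ha
  · exact hρ.weakening_of_le_one a ha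
  · exact ⟨D₀, hD₀, subset_rfl⟩

theorem IsLayering.exists_resolvent_subset_levelClause_succ (hρ : IsLayering F P ρ)
    (x₀ : Fin n) (i : ℕ) (a : Fin s) :
    ∃ (j₁ j₂ : Fin (3 * s)) (x : Fin n),
      (x, true) ∈ levelledFamily x₀ P ρ D₀ i j₁ ∧ (x, false) ∈ levelledFamily x₀ P ρ D₀ i j₂ ∧
      resolventC (levelledFamily x₀ P ρ D₀ i j₁) (levelledFamily x₀ P ρ D₀ i j₂) x ⊆
        levelClause P ρ D₀ (i + 1) a := by
  by_cases hρa : ρ a = i + 2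
  · obtain ⟨v, w, x, hv, hw, hvx, hwx, hres⟩ := hρ.resolvent_of_two_le a (by omega)
    have hvi : levelClause P ρ D₀ i v = P v := if_pos (by omega)
    have hwi : levelClause P ρ D₀ i w = P w := if_pos (by omega)
    have hai : levelClause P ρ D₀ (i + 1) a = P a := if_pos (by omega)
    refine ⟨finProdFinEquiv (2, v), finProdFinEquiv (2, w), x, ?_⟩
    simpa [levelledFamily_finProdFinEquiv, padLiteral, hvi, hwi, hai] using ⟨hvx, hwx, hres⟩
  · have hai : levelClause P ρ D₀ (i + 1) a = levelClause P ρ D₀ i a := by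
      unfold levelClause
      split_ifs <;> first | rfl | omega
    refine ⟨finProdFinEquiv (0, a), finProdFinEquiv (1, a), x₀, ?_⟩
    simpa [levelledFamily_finProdFinEquiv, padLiteral, hai] using
      resolventC_insert_insert_subset (levelClause P ρ D₀ i a) x₀

theorem IsLayering.isLevelledRefutation (hρ : IsLayering F P ρ) (x₀ : Fin n) (hD₀ : D₀ ∈ F)
    {H : ℕ} (hH : 0 < H) (hs : 0 < s) (hlast : P ⟨s - 1, by omega⟩ = ∅)
    (hρlast : ρ ⟨s - 1, by omega⟩ ≤ H) :
    IsLevelledRefutation F fun i : Fin H => levelledFamily x₀ P ρ D₀ i := by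
  refine ⟨hH, by omega, fun j => ?_, fun i _ j => ?_, ?_⟩
  · obtain ⟨D, hD, hsub⟩ := hρ.exists_subset_levelClause_zero hD₀ (finProdFinEquiv.symm j).2
    exact ⟨D, hD, hsub.trans (subset_padLiteral _ _ _)⟩
  · obtain ⟨j₁, j₂, x, hx₁, hx₂, hres⟩ :=
      hρ.exists_resolvent_subset_levelClause_succ x₀ i (finProdFinEquiv.symm j).2
    exact ⟨j₁, j₂, x, hx₁, hx₂, hres.trans (subset_padLiteral _ _ _)⟩
  · have hj : (⟨3 * s - 1, by omega⟩ : Fin (3 * s)) = finProdFinEquiv (2, ⟨s - 1, by omega⟩) :=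
      Fin.ext (by simp [finProdFinEquiv]; omega)
    have hfinal : levelClause P ρ D₀ (H - 1) ⟨s - 1, by omega⟩ = ∅ :=
      (if_pos (by omega)).trans hlast
    simp only [hj, levelledFamily_finProdFinEquiv, hfinal]
    rfl

end Layering

theorem isLevelledRefutation_const_empty {n t : ℕ} {F : CNF n} (ht : 0 < t) (hF : ∅ ∈ F) :
    IsLevelledRefutation F fun (_ : Fin 1) (_ : Fin t) => (∅ : Clause n) :=
  ⟨one_pos, ht, fun _ => ⟨∅, hF, subset_rfl⟩, fun _ hi => absurd hi (by omega), rfl⟩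

section Height

variable {n : ℕ} (Prf : List (Clause n))

def chainLengthsTo (u : Fin Prf.length) : Set ℕ :=
  {k | ∃ L : List (Fin Prf.length), L.length = k ∧ L.IsChain (premiseOf Prf) ∧
    L.getLast? = some u}

noncomputable def clauseHeight (u : Fin Prf.length) : ℕ :=
  sSup (chainLengthsTo Prf u)

variable {Prf}

theorem length_le_of_isChain_premiseOf {L : List (Fin Prf.length)}
    (hL : L.IsChain (premiseOf Prf)) : L.length ≤ Prf.length := by
  have hlt : L.Pairwise (· < ·) := List.isChain_iff_pairwise.mp (hL.imp fun _ _ h => h.1)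
  simpa using List.Nodup.length_le_card (hlt.imp ne_of_lt)

theorem bddAbove_chainLengthsTo (u : Fin Prf.length) : BddAbove (chainLengthsTo Prf u) :=
  ⟨Prf.length, fun _ ⟨_, hL, hc, _⟩ => hL ▸ length_le_of_isChain_premiseOf hc⟩

theorem bddAbove_chainLengths :
    BddAbove {h | ∃ L : List (Fin Prf.length), L.length = h ∧ L.IsChain (premiseOf Prf)} :=
  ⟨Prf.length, fun _ ⟨_, hL, hc⟩ => hL ▸ length_le_of_isChain_premiseOf hc⟩

theorem one_mem_chainLengthsTo (u : Fin Prf.length) : 1 ∈ chainLengthsTo Prf u :=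
  ⟨[u], rfl, List.isChain_singleton u, rfl⟩

theorem clauseHeight_mem (u : Fin Prf.length) : clauseHeight Prf u ∈ chainLengthsTo Prf u :=
  Nat.sSup_mem ⟨1, one_mem_chainLengthsTo u⟩ (bddAbove_chainLengthsTo u)

theorem one_le_clauseHeight (u : Fin Prf.length) : 1 ≤ clauseHeight Prf u :=
  le_csSup (bddAbove_chainLengthsTo u) (one_mem_chainLengthsTo u)

theorem clauseHeight_le_refHeight (u : Fin Prf.length) : clauseHeight Prf u ≤ refHeight Prf :=
  csSup_le ⟨1, one_mem_chainLengthsTo u⟩ fun _ ⟨L, hL, hc, _⟩ =>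
    le_csSup bddAbove_chainLengths ⟨L, hL, hc⟩

theorem clauseHeight_lt_of_premiseOf {v u : Fin Prf.length} (hvu : premiseOf Prf v u) :
    clauseHeight Prf v < clauseHeight Prf u := by
  obtain ⟨L, hL, hc, hlast⟩ := clauseHeight_mem v
  have hc' : (L ++ [u]).IsChain (premiseOf Prf) :=
    hc.append (List.isChain_singleton u) fun x hx y hy => by simp_all
  have : clauseHeight Prf v + 1 ≤ clauseHeight Prf u :=
    le_csSup (bddAbove_chainLengthsTo u) ⟨L ++ [u], by simp [hL], hc', by simp⟩
  omega

theorem exists_premiseOf_of_two_le_clauseHeight {u : Fin Prf.length}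
    (hu : 2 ≤ clauseHeight Prf u) : ∃ v, premiseOf Prf v u := by
  obtain ⟨L, hL, hc, hlast⟩ := clauseHeight_mem u
  obtain rfl | ⟨M, a, rfl⟩ := L.eq_nil_or_concat'
  · simp at hL; omega
  obtain rfl : a = u := by simpa using hlast
  have hM : M ≠ [] := by rintro rfl; simp at hL; omega
  exact ⟨M.getLast hM, hc.rel_getLast_head_of_append hM (List.cons_ne_nil _ _)⟩

theorem isLayering_clauseHeight {F : CNF n} (href : IsRefutation F Prf) :
    IsLayering F Prf.get (clauseHeight Prf) where
  weakening_of_le_one u hu := by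
    refine (href.2.2 u).resolve_right fun ⟨v, w, hv, hw, x, hvx, hwx, hres⟩ => ?_
    have := clauseHeight_lt_of_premiseOf ⟨hv, w, hw, x, .inl ⟨hvx, hwx, hres⟩⟩
    have := one_le_clauseHeight v
    omega
  resolvent_of_two_le u hu := by
    obtain ⟨v, hv, w, hw, x, ⟨hvx, hwx, hres⟩ | ⟨hwx, hvx, hres⟩⟩ :=
      exists_premiseOf_of_two_le_clauseHeight hu
    · exact ⟨v, w, x, clauseHeight_lt_of_premiseOf ⟨hv, w, hw, x, .inl ⟨hvx, hwx, hres⟩⟩,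
        clauseHeight_lt_of_premiseOf ⟨hw, v, hv, x, .inr ⟨hvx, hwx, hres⟩⟩, hvx, hwx, hres⟩
    · exact ⟨w, v, x, clauseHeight_lt_of_premiseOf ⟨hw, v, hv, x, .inl ⟨hwx, hvx, hres⟩⟩,
        clauseHeight_lt_of_premiseOf ⟨hv, w, hw, x, .inr ⟨hwx, hvx, hres⟩⟩, hwx, hvx, hres⟩

theorem nonempty_fin_of_two_le_refHeight (h : 2 ≤ refHeight Prf) : Nonempty (Fin n) := by
  obtain ⟨L, hL, hc⟩ : refHeight Prf ∈
      {h | ∃ L : List (Fin Prf.length), L.length = h ∧ L.IsChain (premiseOf Prf)} :=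
    Nat.sSup_mem ⟨0, [], rfl, List.isChain_nil⟩ bddAbove_chainLengths
  match L, hc with
  | _ :: _ :: _, hc =>
    obtain ⟨-, -, -, x, -⟩ := (List.isChain_cons_cons.mp hc).1
    exact ⟨x⟩
  | [], _ | [_], _ => simp at hL; omega

end Height

theorem refutation_to_levelled_general {n h s : ℕ} (F : CNF n)
    (Prf : List (Clause n)) (href : IsRefutation F Prf)
    (hheight : refHeight Prf = h) (hlen : Prf.length = s) :
    ∃ C : Fin h → Fin (3 * s) → Clause n, IsLevelledRefutation F C := by
  subst hheight hlen
  have hρ := isLayering_clauseHeight href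
  obtain ⟨hne, hlast, hstep⟩ := href
  have hs : 0 < Prf.length := List.length_pos_iff.mpr hne
  have hH : 0 < refHeight Prf := (one_le_clauseHeight ⟨0, hs⟩).trans (clauseHeight_le_refHeight _)
  have hρlast := clauseHeight_le_refHeight (Prf := Prf) ⟨Prf.length - 1, by omega⟩
  have hPlast : Prf.get ⟨Prf.length - 1, by omega⟩ = ∅ := by
    rw [List.getLast?_eq_getLast_of_ne_nil hne, Option.some_inj, List.getLast_eq_getElem] at hlast
    exact hlast
  rcases le_or_gt (refHeight Prf) 1 with h1 | h2
  · obtain ⟨D, hD, hDsub⟩ := hρ.weakening_of_le_one _ (hρlast.trans h1)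
    rw [hPlast, Finset.subset_empty] at hDsub
    rw [le_antisymm h1 hH]
    exact ⟨_, isLevelledRefutation_const_empty (by omega) (hDsub ▸ hD)⟩
  · obtain ⟨x₀⟩ := nonempty_fin_of_two_le_refHeight h2
    obtain ⟨D₀, hD₀, -⟩ := (hstep ⟨0, hs⟩).resolve_right fun ⟨_, _, hv, _⟩ => Nat.not_lt_zero _ hv
    exact ⟨_, hρ.isLevelledRefutation x₀ hD₀ hH hs hPlast hρlast⟩

/-- If an `(n−1)`-CNF `F` in `n` variables has a resolution refutation of height `h`
and length `s` in which every clause is non-tautological, then `F` has a resolution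
refutation of `h` levels of `3s` clauses. -/
theorem refutation_to_levelled {n h s : ℕ} (F : CNF n)
    (hF : ∀ C ∈ F, C.card ≤ n - 1)
    (Prf : List (Clause n)) (href : IsRefutation F Prf)
    (hheight : refHeight Prf = h) (hlen : Prf.length = s)
    (hnt : ∀ C ∈ Prf, ∀ x : Fin n, ¬((x, true) ∈ C ∧ (x, false) ∈ C)) :
    ∃ C : Fin h → Fin (3 * s) → Clause n, IsLevelledRefutation F C :=
  refutation_to_levelled_general F Prf href hheight hlen
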